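/- Assume: (i) q_i(x_j)=δ_{ij}, s_i(y_j)=δ_{ij}; (ii) L_m = sup_x Σ_i|q_i(x)| and L̃_n = sup_y Σ_j|s_j(y)| are finite; (iii) f : I×J → ℝ is bounded with ε* = inf_{g ∈ W^{m,n}} ‖f − g‖_∞ where W^{m,n} = span{q_i ⊗ s_j}; (iv) F_{ij} = f(x_i,y_j) and F̃ ∈ ℝ^{m×n} is any matrix, and f̃(x,y) = Σ_{i,j} F̃_{ij} q_i(x) s_j(y). Then ‖f − f̃‖_{L^∞(I×J)} ≤ (1 + L_m L̃_n) ε* + L_m L̃_n √(mn) ‖F − F̃‖_F. -/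
import Mathlib

open Finset

/-- combined TEIM + matrix-perturbation (e.g. SVD truncation) error bound:
`‖f − f̃‖_∞ ≤ (1 + L_m L̃_n) ε* + L_m L̃_n √(mn) ‖F − F̃‖_F`, where
`f̃(x,y) = Σ_{i,j} F̃_{ij} q_i(x) s_j(y)` and `F_{ij} = f(x_i, y_j)`. -/
theorem teim_svd_combined_error_bound {I J : Type*} [Nonempty I] [Nonempty J]
    {m n : ℕ} (q : Fin m → I → ℝ) (s : Fin n → J → ℝ)
    (xs : Fin m → I) (ys : Fin n → J) (f : I → J → ℝ)
    (hq : ∀ i j : Fin m, q i (xs j) = if i = j then 1 else 0)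
    (hs : ∀ i j : Fin n, s i (ys j) = if i = j then 1 else 0)
    (hf : ∃ C : ℝ, ∀ (x : I) (y : J), |f x y| ≤ C)
    (hLq : BddAbove (Set.range fun x : I => ∑ i : Fin m, |q i x|))
    (hLs : BddAbove (Set.range fun y : J => ∑ j : Fin n, |s j y|))
    (Ftil : Matrix (Fin m) (Fin n) ℝ) :
    ∀ (x : I) (y : J),
      |f x y - ∑ i : Fin m, ∑ j : Fin n, Ftil i j * q i x * s j y| ≤
        (1 + (⨆ x : I, ∑ i : Fin m, |q i x|) * (⨆ y : J, ∑ j : Fin n, |s j y|)) *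
          (⨅ g : (Submodule.span ℝ
              {h : I → J → ℝ | ∃ (i : Fin m) (j : Fin n), h = fun x y => q i x * s j y}),
            ⨆ p : I × J, |f p.1 p.2 - (g : I → J → ℝ) p.1 p.2|) +
        (⨆ x : I, ∑ i : Fin m, |q i x|) * (⨆ y : J, ∑ j : Fin n, |s j y|) *
          Real.sqrt (m * n) *
          Real.sqrt (∑ i : Fin m, ∑ j : Fin n, (f (xs i) (ys j) - Ftil i j) ^ 2) := by
  intro x y
  set L : ℝ := ⨆ x : I, ∑ i : Fin m, |q i x| with hLdef
  set L' : ℝ := ⨆ y : J, ∑ j : Fin n, |s j y| with hL'def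
  have hLx : ∀ x : I, ∑ i : Fin m, |q i x| ≤ L := fun x => le_ciSup hLq x
  have hL'y : ∀ y : J, ∑ j : Fin n, |s j y| ≤ L' := fun y => le_ciSup hLs y
  have hL0 : 0 ≤ L := le_trans (Finset.sum_nonneg fun i _ => abs_nonneg _) (hLx x)
  have hL'0 : 0 ≤ L' := le_trans (Finset.sum_nonneg fun j _ => abs_nonneg _) (hL'y y)
  have hq1 : ∀ (x : I) (i : Fin m), |q i x| ≤ L := fun x i =>
    le_trans (Finset.single_le_sum (f := fun i => |q i x|) (fun i _ => abs_nonneg _)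
      (mem_univ i)) (hLx x)
  have hs1 : ∀ (y : J) (j : Fin n), |s j y| ≤ L' := fun y j =>
    le_trans (Finset.single_le_sum (f := fun j => |s j y|) (fun j _ => abs_nonneg _)
      (mem_univ j)) (hL'y y)
  set W := Submodule.span ℝ
    {h : I → J → ℝ | ∃ (i : Fin m) (j : Fin n), h = fun x y => q i x * s j y} with hWdef
  -- reproduction property
  have repro : ∀ g ∈ W, ∀ (x : I) (y : J),
      g x y = ∑ i : Fin m, ∑ j : Fin n, g (xs i) (ys j) * q i x * s j y := by
    intro g hg
    induction hg using Submodule.span_induction with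
    | mem h hh =>
      obtain ⟨i, j, rfl⟩ := hh
      intro x y
      simp only [hq, hs]
      simp [ite_mul, mul_ite, Finset.sum_ite_eq, Finset.mem_univ]
    | zero => intro x y; simp
    | add a b _ _ ha hb =>
      intro x y
      simp only [Pi.add_apply, ha x y, hb x y, add_mul, ← Finset.sum_add_distrib]
    | smul c a _ ha =>
      intro x y
      simp only [Pi.smul_apply, smul_eq_mul, ha x y, Finset.mul_sum, mul_assoc]
  -- boundedness of elements of W
  have bddW : ∀ g ∈ W, ∃ D : ℝ, ∀ (x : I) (y : J), |g x y| ≤ D := by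
    intro g hg
    induction hg using Submodule.span_induction with
    | mem h hh =>
      obtain ⟨i, j, rfl⟩ := hh
      exact ⟨L * L', fun x y => by
        rw [abs_mul]
        exact mul_le_mul (hq1 x i) (hs1 y j) (abs_nonneg _) hL0⟩
    | zero => exact ⟨0, fun x y => by simp⟩
    | add a b _ _ ha hb =>
      obtain ⟨D1, h1⟩ := ha; obtain ⟨D2, h2⟩ := hb
      exact ⟨D1 + D2, fun x y => le_trans (abs_add_le _ _) (add_le_add (h1 x y) (h2 x y))⟩
    | smul c a _ ha =>
      obtain ⟨D, hD⟩ := ha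
      exact ⟨|c| * D, fun x y => by
        simp only [Pi.smul_apply, smul_eq_mul, abs_mul]
        exact mul_le_mul_of_nonneg_left (hD x y) (abs_nonneg _)⟩
  obtain ⟨Cf, hCf⟩ := hf
  set T : ℝ := ∑ i : Fin m, ∑ j : Fin n, Ftil i j * q i x * s j y with hTdef
  set S : ℝ := Real.sqrt (∑ i : Fin m, ∑ j : Fin n, (f (xs i) (ys j) - Ftil i j) ^ 2)
    with hSdef
  set C : ℝ := L * L' * Real.sqrt (m * n) * S with hCdef
  -- Cauchy-Schwarz part: ∑∑ |Fd| ≤ √(mn) * S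
  have hCS : ∑ i : Fin m, ∑ j : Fin n, |f (xs i) (ys j) - Ftil i j| ≤
      Real.sqrt (m * n) * S := by
    rw [← Fintype.sum_prod_type (f := fun p : Fin m × Fin n => |f (xs p.1) (ys p.2) - Ftil p.1 p.2|)]
    have h1 : (∑ p : Fin m × Fin n, |f (xs p.1) (ys p.2) - Ftil p.1 p.2|) ^ 2 ≤
        (m * n : ℝ) * ∑ p : Fin m × Fin n, (f (xs p.1) (ys p.2) - Ftil p.1 p.2) ^ 2 := by
      have := sq_sum_le_card_mul_sum_sq
        (s := (univ : Finset (Fin m × Fin n)))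
        (f := fun p : Fin m × Fin n => |f (xs p.1) (ys p.2) - Ftil p.1 p.2|)
      simpa [sq_abs, Finset.card_univ, mul_comm] using this
    have h2 : ∑ p : Fin m × Fin n, (f (xs p.1) (ys p.2) - Ftil p.1 p.2) ^ 2 =
        ∑ i : Fin m, ∑ j : Fin n, (f (xs i) (ys j) - Ftil i j) ^ 2 :=
      Fintype.sum_prod_type _
    have hnn : 0 ≤ ∑ p : Fin m × Fin n, |f (xs p.1) (ys p.2) - Ftil p.1 p.2| :=
      Finset.sum_nonneg fun p _ => abs_nonneg _
    calc ∑ p : Fin m × Fin n, |f (xs p.1) (ys p.2) - Ftil p.1 p.2|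
        = Real.sqrt ((∑ p : Fin m × Fin n, |f (xs p.1) (ys p.2) - Ftil p.1 p.2|) ^ 2) :=
          (Real.sqrt_sq hnn).symm
      _ ≤ Real.sqrt ((m * n : ℝ) * ∑ i : Fin m, ∑ j : Fin n, (f (xs i) (ys j) - Ftil i j) ^ 2) := by
          apply Real.sqrt_le_sqrt; rw [← h2]; exact h1
      _ = Real.sqrt (m * n) * S := by
          rw [hSdef, Real.sqrt_mul (by positivity)]
  -- per-g bound
  have key : ∀ g : W, |f x y - T| - C ≤
      (⨆ p : I × J, |f p.1 p.2 - (g : I → J → ℝ) p.1 p.2|) * (1 + L * L') := by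
    intro g
    set gv : I → J → ℝ := (g : I → J → ℝ) with hgv
    obtain ⟨D, hD⟩ := bddW gv g.2
    have hbdd : BddAbove (Set.range fun p : I × J => |f p.1 p.2 - gv p.1 p.2|) := by
      refine ⟨Cf + D, ?_⟩
      rintro _ ⟨p, rfl⟩
      calc |f p.1 p.2 - gv p.1 p.2| ≤ |f p.1 p.2| + |gv p.1 p.2| := abs_sub _ _
        _ ≤ Cf + D := add_le_add (hCf _ _) (hD _ _)
    set E : ℝ := ⨆ p : I × J, |f p.1 p.2 - gv p.1 p.2| with hEdef
    have hE : ∀ (a : I) (b : J), |f a b - gv a b| ≤ E := fun a b =>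
      le_ciSup hbdd (a, b)
    have hE0 : 0 ≤ E := le_trans (abs_nonneg _) (hE x y)
    -- decomposition
    have hdec : f x y - T = (f x y - gv x y) +
        (∑ i : Fin m, ∑ j : Fin n, (gv (xs i) (ys j) - f (xs i) (ys j)) * q i x * s j y) +
        (∑ i : Fin m, ∑ j : Fin n, (f (xs i) (ys j) - Ftil i j) * q i x * s j y) := by
      have hg := repro gv g.2 x y
      simp only [sub_mul, Finset.sum_sub_distrib]
      rw [hTdef]
      rw [hg]
      ring
    have b1 : |∑ i : Fin m, ∑ j : Fin n, (gv (xs i) (ys j) - f (xs i) (ys j)) * q i x * s j y|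
        ≤ E * (L * L') := by
      calc |∑ i : Fin m, ∑ j : Fin n, (gv (xs i) (ys j) - f (xs i) (ys j)) * q i x * s j y|
          ≤ ∑ i : Fin m, ∑ j : Fin n, |(gv (xs i) (ys j) - f (xs i) (ys j)) * q i x * s j y| := by
            refine le_trans (Finset.abs_sum_le_sum_abs _ _) ?_
            exact Finset.sum_le_sum fun i _ => Finset.abs_sum_le_sum_abs _ _
        _ ≤ ∑ i : Fin m, ∑ j : Fin n, E * |q i x| * |s j y| := by
            refine Finset.sum_le_sum fun i _ => Finset.sum_le_sum fun j _ => ?_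
            rw [abs_mul, abs_mul]
            have h1 : |gv (xs i) (ys j) - f (xs i) (ys j)| ≤ E := by
              rw [abs_sub_comm]; exact hE _ _
            exact mul_le_mul_of_nonneg_right
              (mul_le_mul_of_nonneg_right h1 (abs_nonneg _)) (abs_nonneg _)
        _ = E * ((∑ i : Fin m, |q i x|) * (∑ j : Fin n, |s j y|)) := by
            rw [Finset.sum_mul_sum, Finset.mul_sum]
            exact Finset.sum_congr rfl fun i _ => by
              rw [Finset.mul_sum]
              exact Finset.sum_congr rfl fun j _ => by ring
        _ ≤ E * (L * L') := by
            refine mul_le_mul_of_nonneg_left ?_ hE0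
            exact mul_le_mul (hLx x) (hL'y y)
              (Finset.sum_nonneg fun j _ => abs_nonneg _) hL0
    have b2 : |∑ i : Fin m, ∑ j : Fin n, (f (xs i) (ys j) - Ftil i j) * q i x * s j y| ≤ C := by
      calc |∑ i : Fin m, ∑ j : Fin n, (f (xs i) (ys j) - Ftil i j) * q i x * s j y|
          ≤ ∑ i : Fin m, ∑ j : Fin n, |(f (xs i) (ys j) - Ftil i j) * q i x * s j y| := by
            refine le_trans (Finset.abs_sum_le_sum_abs _ _) ?_
            exact Finset.sum_le_sum fun i _ => Finset.abs_sum_le_sum_abs _ _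
        _ ≤ ∑ i : Fin m, ∑ j : Fin n, |f (xs i) (ys j) - Ftil i j| * (L * L') := by
            refine Finset.sum_le_sum fun i _ => Finset.sum_le_sum fun j _ => ?_
            rw [abs_mul, abs_mul, mul_assoc]
            refine mul_le_mul_of_nonneg_left ?_ (abs_nonneg _)
            exact mul_le_mul (hq1 x i) (hs1 y j) (abs_nonneg _) hL0
        _ = (∑ i : Fin m, ∑ j : Fin n, |f (xs i) (ys j) - Ftil i j|) * (L * L') := by
            rw [Finset.sum_mul]
            exact Finset.sum_congr rfl fun i _ => (Finset.sum_mul _ _ _).symm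
        _ ≤ (Real.sqrt (m * n) * S) * (L * L') :=
            mul_le_mul_of_nonneg_right hCS (by positivity)
        _ = C := by rw [hCdef]; ring
    have htri : |f x y - T| ≤ E + E * (L * L') + C := by
      rw [hdec]
      refine le_trans (abs_add_le _ _) ?_
      refine add_le_add (le_trans (abs_add_le _ _) (add_le_add (hE x y) b1)) b2
    nlinarith [htri]
  -- conclude via ciInf
  set ε : ℝ := ⨅ g : W, ⨆ p : I × J, |f p.1 p.2 - (g : I → J → ℝ) p.1 p.2| with hεdef
  have hpos : (0 : ℝ) < 1 + L * L' := by nlinarith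
  have hinf : (|f x y - T| - C) / (1 + L * L') ≤ ε := by
    refine le_ciInf fun g => ?_
    rw [div_le_iff₀ hpos]
    exact key g
  have h2 : |f x y - T| - C ≤ ε * (1 + L * L') := (div_le_iff₀ hpos).mp hinf
  nlinarith [h2]
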